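/- arXiv:1201.6471 — 3 statements merged into one kernel-verified Lean document; each statement's English description precedes it below -/
import Mathlib

section
/- Let z ∈ ℝ and let g_n : (−∞, 0] → ℝ be a twice differentiable function with −g_n''(s) − s·g_n(s) = z·g_n(s) for s ≤ 0, g_n(0) = 0, ∫_{−∞}^0 g_n(s)² ds = 1, and such that g_n, g_n' decay exponentially at −∞. Let f : (−∞,0] → ℝ decay exponentially, let c, α ∈ ℝ, and suppose g : (−∞,0] → ℝ is twice differentiable with exponential decay of g and g' at −∞, satisfies (−∂_s² − s − z)g = f + α·g_n on (−∞,0), and g(0) = c. Then α = c·g_n'(0) − ∫_{−∞}^0 f(s)·g_n(s) ds. -/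
/-!
Multiply the equation for `g` by `gₙ` and subtract `g` times the homogeneous equation for `gₙ`:
the potential terms cancel, and `g'' gₙ - g gₙ''`, the derivative of the Wronskian
`g' gₙ - g gₙ'`, equals `-(f gₙ + α gₙ²)`. Integrated over `(-∞, 0]`, the Wronskian vanishes
at `-∞` by exponential decay and equals `-c gₙ'(0)` at `0` since `gₙ(0) = 0`; the
normalisation `∫ gₙ² = 1` then isolates `α`.
-/

open MeasureTheory Set Filter Topology Real

def ExpDecayAtBot (u : ℝ → ℝ) : Prop :=
  ∃ C a : ℝ, 0 < a ∧ ∀ s ≤ (0 : ℝ), |u s| ≤ C * exp (a * s)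

lemma expDecayAtBot_of_common_bound {u v : ℝ → ℝ}
    (h : ∃ C a : ℝ, 0 < a ∧
      ∀ s ≤ (0 : ℝ), |u s| ≤ C * exp (a * s) ∧ |v s| ≤ C * exp (a * s)) :
    ExpDecayAtBot u ∧ ExpDecayAtBot v :=
  let ⟨C, a, ha, hb⟩ := h
  ⟨⟨C, a, ha, fun s hs => (hb s hs).1⟩, ⟨C, a, ha, fun s hs => (hb s hs).2⟩⟩

namespace ExpDecayAtBot

variable {u v : ℝ → ℝ}

lemma mul (hu : ExpDecayAtBot u) (hv : ExpDecayAtBot v) :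
    ExpDecayAtBot (fun s => u s * v s) := by
  obtain ⟨C₁, a₁, ha₁, hu⟩ := hu
  obtain ⟨C₂, a₂, ha₂, hv⟩ := hv
  refine ⟨C₁ * C₂, a₁ + a₂, add_pos ha₁ ha₂, fun s hs => ?_⟩
  calc |u s * v s| = |u s| * |v s| := abs_mul _ _
    _ ≤ C₁ * exp (a₁ * s) * (C₂ * exp (a₂ * s)) :=
        mul_le_mul (hu s hs) (hv s hs) (abs_nonneg _) ((abs_nonneg _).trans (hu s hs))
    _ = C₁ * C₂ * exp ((a₁ + a₂) * s) := by rw [add_mul, exp_add]; ring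

lemma integrableOn (hu : ExpDecayAtBot u)
    (hmeas : AEStronglyMeasurable u (volume.restrict (Iic 0))) : IntegrableOn u (Iic 0) := by
  obtain ⟨C, a, ha, hb⟩ := hu
  refine Integrable.mono' ((integrableOn_exp_mul_Iic ha 0).const_mul C) hmeas ?_
  exact ae_restrict_of_forall_mem measurableSet_Iic fun s hs =>
    (norm_eq_abs (u s)).trans_le (hb s hs)

lemma tendsto_atBot (hu : ExpDecayAtBot u) : Tendsto u atBot (𝓝 0) := by
  obtain ⟨C, a, ha, hb⟩ := hu
  have hexp : Tendsto (fun s => C * exp (a * s)) atBot (𝓝 0) := by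
    simpa using (tendsto_exp_atBot.comp (tendsto_id.const_mul_atBot ha)).const_mul C
  refine squeeze_zero_norm' ?_ hexp
  filter_upwards [Iic_mem_atBot 0] with s hs
  exact (norm_eq_abs (u s)).trans_le (hb s hs)

end ExpDecayAtBot

theorem integral_Iic_wronskian {u u' u'' v v' v'' : ℝ → ℝ} {b : ℝ}
    (hu : ∀ s ∈ Iic b, HasDerivWithinAt u (u' s) (Iic b) s)
    (hu' : ∀ s ∈ Iic b, HasDerivWithinAt u' (u'' s) (Iic b) s)
    (hv : ∀ s ∈ Iic b, HasDerivWithinAt v (v' s) (Iic b) s)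
    (hv' : ∀ s ∈ Iic b, HasDerivWithinAt v' (v'' s) (Iic b) s)
    (hlim : Tendsto (fun s => u' s * v s - u s * v' s) atBot (𝓝 0))
    (hint : IntegrableOn (fun s => u'' s * v s - u s * v'' s) (Iic b)) :
    ∫ s in Iic b, (u'' s * v s - u s * v'' s) = u' b * v b - u b * v' b := by
  have hW : ∀ s ∈ Iic b, HasDerivWithinAt (fun s => u' s * v s - u s * v' s)
      (u'' s * v s - u s * v'' s) (Iic b) s := fun s hs =>
    (((hu' s hs).mul (hv s hs)).sub ((hu s hs).mul (hv' s hs))).congr_deriv (by ring)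
  simpa using integral_Iic_of_hasDerivAt_of_tendsto (hW b self_mem_Iic).continuousWithinAt
    (fun s hs => (hW s hs.out.le).hasDerivAt (Iic_mem_nhds hs)) hint hlim

theorem stmt4 (z : ℝ) (gn gn' gn'' f g g' g'' : ℝ → ℝ) (c α : ℝ)
    (hgn1 : ∀ s ∈ Set.Iic (0:ℝ), HasDerivWithinAt gn (gn' s) (Set.Iic 0) s)
    (hgn2 : ∀ s ∈ Set.Iic (0:ℝ), HasDerivWithinAt gn' (gn'' s) (Set.Iic 0) s)
    (hgneq : ∀ s ≤ (0:ℝ), -gn'' s - s * gn s = z * gn s)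
    (hgn0 : gn 0 = 0)
    (hnorm : ∫ s in Set.Iic (0:ℝ), (gn s) ^ 2 = 1)
    (hgndec : ∃ C a : ℝ, 0 < a ∧ ∀ s ≤ (0:ℝ),
      |gn s| ≤ C * Real.exp (a * s) ∧ |gn' s| ≤ C * Real.exp (a * s))
    (hfcont : ContinuousOn f (Set.Iic 0))
    (hfdec : ∃ C a : ℝ, 0 < a ∧ ∀ s ≤ (0:ℝ), |f s| ≤ C * Real.exp (a * s))
    (hg1 : ∀ s ∈ Set.Iic (0:ℝ), HasDerivWithinAt g (g' s) (Set.Iic 0) s)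
    (hg2 : ∀ s ∈ Set.Iic (0:ℝ), HasDerivWithinAt g' (g'' s) (Set.Iic 0) s)
    (hgeq : ∀ s < (0:ℝ), -g'' s - s * g s - z * g s = f s + α * gn s)
    (hgdec : ∃ C a : ℝ, 0 < a ∧ ∀ s ≤ (0:ℝ),
      |g s| ≤ C * Real.exp (a * s) ∧ |g' s| ≤ C * Real.exp (a * s))
    (hgc : g 0 = c) :
    α = c * gn' 0 - ∫ s in Set.Iic (0:ℝ), f s * gn s := by
  obtain ⟨hgn_dec, hgn'_dec⟩ := expDecayAtBot_of_common_bound hgndec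
  obtain ⟨hg_dec, hg'_dec⟩ := expDecayAtBot_of_common_bound hgdec
  have hgn_cont : ContinuousOn gn (Iic 0) := fun s hs => (hgn1 s hs).continuousWithinAt
  have hfgn : IntegrableOn (fun s => f s * gn s) (Iic 0) :=
    (ExpDecayAtBot.mul hfdec hgn_dec).integrableOn
      ((hfcont.mul hgn_cont).aestronglyMeasurable measurableSet_Iic)
  have hgn_sq : IntegrableOn (fun s => gn s ^ 2) (Iic 0) := by
    simpa only [sq] using (hgn_dec.mul hgn_dec).integrableOn
      ((hgn_cont.mul hgn_cont).aestronglyMeasurable measurableSet_Iic)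
  have hpointwise : EqOn (fun s => g'' s * gn s - g s * gn'' s)
      (fun s => -(f s * gn s) - α * gn s ^ 2) (Iio 0) := fun s hs => by
    linear_combination (-gn s) * hgeq s hs + g s * hgneq s (le_of_lt hs)
  have hint : IntegrableOn (fun s => g'' s * gn s - g s * gn'' s) (Iic 0) := by
    rw [integrableOn_Iic_iff_integrableOn_Iio]
    exact ((hfgn.neg.sub (hgn_sq.const_mul α)).mono_set Iio_subset_Iic_self).congr_fun
      hpointwise.symm measurableSet_Iio
  have hgreen := integral_Iic_wronskian hg1 hg2 hgn1 hgn2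
    (by simpa using (hg'_dec.mul hgn_dec).tendsto_atBot.sub (hg_dec.mul hgn'_dec).tendsto_atBot)
    hint
  have hrhs : ∫ s in Iic (0:ℝ), (-(f s * gn s) - α * gn s ^ 2) =
      -(∫ s in Iic (0:ℝ), f s * gn s) - α := by
    rw [integral_sub (f := fun s => -(f s * gn s)) hfgn.neg (hgn_sq.const_mul α),
      integral_neg, integral_const_mul, hnorm, mul_one]
  rw [integral_Iic_eq_integral_Iio, setIntegral_congr_fun measurableSet_Iio hpointwise,
    ← integral_Iic_eq_integral_Iio, hrhs, hgn0, hgc] at hgreen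
  linarith
end

section
/- With the notation and hypotheses of the Airy-type compatibility lemma on ℝ₋ (g_n a normalized exponentially decaying solution of −g'' − s g = z g with g_n(0) = 0), the coefficient α is unique: if (g₁, α₁) and (g₂, α₂) both satisfy (−∂_s² − s − z)g_i = f + α_i·g_n on (−∞,0) with g_i(0) = c and exponential decay of g_i and g_i', then α₁ = α₂. -/
/-!
With `w = g₁ - g₂` and `β = α₁ - α₂`, the source `f` cancels and `-w'' - s w - z w = β gₙ`.
The Wronskian `gₙ' w - gₙ w'` then has derivative `β gₙ²`; it vanishes at `0`, where both `gₙ`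
and `w` vanish, and at `-∞` by exponential decay. Integrating over `(-∞, 0]` gives
`β ∫ gₙ² = 0`, and `∫ gₙ² = 1`.
-/

open Set MeasureTheory Filter Topology

theorem tendsto_atBot_zero_of_abs_le_mul_exp {φ : ℝ → ℝ} {C a : ℝ} (ha : 0 < a)
    (hφ : ∀ s ≤ (0 : ℝ), |φ s| ≤ C * Real.exp (a * s)) : Tendsto φ atBot (𝓝 0) := by
  have hexp : Tendsto (fun s => C * Real.exp (a * s)) atBot (𝓝 0) := by
    simpa using (Real.tendsto_exp_atBot.comp (tendsto_id.const_mul_atBot ha)).const_mul C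
  exact squeeze_zero_norm' (eventually_atBot.2 ⟨0, hφ⟩) hexp

theorem mul_integral_Iic_sq_eq_zero_of_wronskian {u u' u'' w w' w'' q : ℝ → ℝ} {a β : ℝ}
    (hu : ∀ s ∈ Iic a, HasDerivWithinAt u (u' s) (Iic a) s)
    (hu' : ∀ s ∈ Iic a, HasDerivWithinAt u' (u'' s) (Iic a) s)
    (hw : ∀ s ∈ Iic a, HasDerivWithinAt w (w' s) (Iic a) s)
    (hw' : ∀ s ∈ Iic a, HasDerivWithinAt w' (w'' s) (Iic a) s)
    (hueq : ∀ s < a, u'' s = q s * u s) (hweq : ∀ s < a, w'' s = q s * w s - β * u s)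
    (hua : u a = 0) (hwa : w a = 0)
    (hu_lim : Tendsto u atBot (𝓝 0)) (hu'_lim : Tendsto u' atBot (𝓝 0))
    (hw_lim : Tendsto w atBot (𝓝 0)) (hw'_lim : Tendsto w' atBot (𝓝 0))
    (hint : IntegrableOn (fun s => u s ^ 2) (Iic a)) :
    β * ∫ s in Iic a, u s ^ 2 = 0 := by
  set W : ℝ → ℝ := fun s => u' s * w s - u s * w' s
  have hW_deriv : ∀ s ∈ Iio a, HasDerivAt W (β * u s ^ 2) s := by
    intro s hs
    have hnhds : Iic a ∈ 𝓝 s := Iic_mem_nhds hs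
    have hs' : s ∈ Iic a := mem_Iic.2 (le_of_lt hs)
    refine (((hu' s hs').hasDerivAt hnhds).mul ((hw s hs').hasDerivAt hnhds) |>.sub
      (((hu s hs').hasDerivAt hnhds).mul ((hw' s hs').hasDerivAt hnhds))).congr_deriv ?_
    rw [hueq s hs, hweq s hs]
    ring
  have hW_cont : ContinuousWithinAt W (Iic a) a :=
    ((hu' a self_mem_Iic).continuousWithinAt.mul (hw a self_mem_Iic).continuousWithinAt).sub
      ((hu a self_mem_Iic).continuousWithinAt.mul (hw' a self_mem_Iic).continuousWithinAt)
  have hW_lim : Tendsto W atBot (𝓝 0) := by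
    simpa using (hu'_lim.mul hw_lim).sub (hu_lim.mul hw'_lim)
  have hFTC := integral_Iic_of_hasDerivAt_of_tendsto hW_cont hW_deriv (hint.const_mul β) hW_lim
  rw [integral_const_mul] at hFTC
  simpa [W, hua, hwa] using hFTC

theorem stmt5_general (z : ℝ) (gn gn' gn'' f g₁ g₁' g₁'' g₂ g₂' g₂'' : ℝ → ℝ) (c α₁ α₂ : ℝ)
    (hgn1 : ∀ s ∈ Set.Iic (0:ℝ), HasDerivWithinAt gn (gn' s) (Set.Iic 0) s)
    (hgn2 : ∀ s ∈ Set.Iic (0:ℝ), HasDerivWithinAt gn' (gn'' s) (Set.Iic 0) s)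
    (hgneq : ∀ s ≤ (0:ℝ), -gn'' s - s * gn s = z * gn s)
    (hgn0 : gn 0 = 0)
    (hnorm : ∫ s in Set.Iic (0:ℝ), (gn s) ^ 2 = 1)
    (hgndec : ∃ C a : ℝ, 0 < a ∧ ∀ s ≤ (0:ℝ),
      |gn s| ≤ C * Real.exp (a * s) ∧ |gn' s| ≤ C * Real.exp (a * s))
    (hg11 : ∀ s ∈ Set.Iic (0:ℝ), HasDerivWithinAt g₁ (g₁' s) (Set.Iic 0) s)
    (hg12 : ∀ s ∈ Set.Iic (0:ℝ), HasDerivWithinAt g₁' (g₁'' s) (Set.Iic 0) s)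
    (hg1eq : ∀ s < (0:ℝ), -g₁'' s - s * g₁ s - z * g₁ s = f s + α₁ * gn s)
    (hg1dec : ∃ C a : ℝ, 0 < a ∧ ∀ s ≤ (0:ℝ),
      |g₁ s| ≤ C * Real.exp (a * s) ∧ |g₁' s| ≤ C * Real.exp (a * s))
    (hg1c : g₁ 0 = c)
    (hg21 : ∀ s ∈ Set.Iic (0:ℝ), HasDerivWithinAt g₂ (g₂' s) (Set.Iic 0) s)
    (hg22 : ∀ s ∈ Set.Iic (0:ℝ), HasDerivWithinAt g₂' (g₂'' s) (Set.Iic 0) s)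
    (hg2eq : ∀ s < (0:ℝ), -g₂'' s - s * g₂ s - z * g₂ s = f s + α₂ * gn s)
    (hg2dec : ∃ C a : ℝ, 0 < a ∧ ∀ s ≤ (0:ℝ),
      |g₂ s| ≤ C * Real.exp (a * s) ∧ |g₂' s| ≤ C * Real.exp (a * s))
    (hg2c : g₂ 0 = c) :
    α₁ = α₂ := by
  have hlim : ∀ {φ φ' : ℝ → ℝ}, (∃ C a : ℝ, 0 < a ∧ ∀ s ≤ (0:ℝ),
      |φ s| ≤ C * Real.exp (a * s) ∧ |φ' s| ≤ C * Real.exp (a * s)) →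
      Tendsto φ atBot (𝓝 0) ∧ Tendsto φ' atBot (𝓝 0) := fun ⟨_, _, ha, h⟩ =>
    ⟨tendsto_atBot_zero_of_abs_le_mul_exp ha fun s hs => (h s hs).1,
      tendsto_atBot_zero_of_abs_le_mul_exp ha fun s hs => (h s hs).2⟩
  obtain ⟨hgn_lim, hgn'_lim⟩ := hlim hgndec
  obtain ⟨hg₁_lim, hg₁'_lim⟩ := hlim hg1dec
  obtain ⟨hg₂_lim, hg₂'_lim⟩ := hlim hg2dec
  have hint : IntegrableOn (fun s => gn s ^ 2) (Iic 0) :=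
    Integrable.of_integral_ne_zero (by rw [hnorm]; exact one_ne_zero)
  have key := mul_integral_Iic_sq_eq_zero_of_wronskian (q := fun s => -(s + z))
    (w := fun s => g₁ s - g₂ s) (w' := fun s => g₁' s - g₂' s)
    (w'' := fun s => g₁'' s - g₂'' s) (β := α₁ - α₂) hgn1 hgn2
    (fun s hs => (hg11 s hs).sub (hg21 s hs)) (fun s hs => (hg12 s hs).sub (hg22 s hs))
    (fun s hs => by linear_combination -hgneq s hs.le)
    (fun s hs => by linear_combination -hg1eq s hs + hg2eq s hs)
    hgn0 (by rw [hg1c, hg2c, sub_self])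
    hgn_lim hgn'_lim (by simpa using hg₁_lim.sub hg₂_lim)
    (by simpa using hg₁'_lim.sub hg₂'_lim)
    hint
  rw [hnorm, mul_one, sub_eq_zero] at key
  exact key

theorem stmt5 (z : ℝ) (gn gn' gn'' f g₁ g₁' g₁'' g₂ g₂' g₂'' : ℝ → ℝ) (c α₁ α₂ : ℝ)
    (hgn1 : ∀ s ∈ Set.Iic (0:ℝ), HasDerivWithinAt gn (gn' s) (Set.Iic 0) s)
    (hgn2 : ∀ s ∈ Set.Iic (0:ℝ), HasDerivWithinAt gn' (gn'' s) (Set.Iic 0) s)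
    (hgneq : ∀ s ≤ (0:ℝ), -gn'' s - s * gn s = z * gn s)
    (hgn0 : gn 0 = 0)
    (hnorm : ∫ s in Set.Iic (0:ℝ), (gn s) ^ 2 = 1)
    (hgndec : ∃ C a : ℝ, 0 < a ∧ ∀ s ≤ (0:ℝ),
      |gn s| ≤ C * Real.exp (a * s) ∧ |gn' s| ≤ C * Real.exp (a * s))
    (hfcont : ContinuousOn f (Set.Iic 0))
    (hfdec : ∃ C a : ℝ, 0 < a ∧ ∀ s ≤ (0:ℝ), |f s| ≤ C * Real.exp (a * s))
    (hg11 : ∀ s ∈ Set.Iic (0:ℝ), HasDerivWithinAt g₁ (g₁' s) (Set.Iic 0) s)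
    (hg12 : ∀ s ∈ Set.Iic (0:ℝ), HasDerivWithinAt g₁' (g₁'' s) (Set.Iic 0) s)
    (hg1eq : ∀ s < (0:ℝ), -g₁'' s - s * g₁ s - z * g₁ s = f s + α₁ * gn s)
    (hg1dec : ∃ C a : ℝ, 0 < a ∧ ∀ s ≤ (0:ℝ),
      |g₁ s| ≤ C * Real.exp (a * s) ∧ |g₁' s| ≤ C * Real.exp (a * s))
    (hg1c : g₁ 0 = c)
    (hg21 : ∀ s ∈ Set.Iic (0:ℝ), HasDerivWithinAt g₂ (g₂' s) (Set.Iic 0) s)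
    (hg22 : ∀ s ∈ Set.Iic (0:ℝ), HasDerivWithinAt g₂' (g₂'' s) (Set.Iic 0) s)
    (hg2eq : ∀ s < (0:ℝ), -g₂'' s - s * g₂ s - z * g₂ s = f s + α₂ * gn s)
    (hg2dec : ∃ C a : ℝ, 0 < a ∧ ∀ s ≤ (0:ℝ),
      |g₂ s| ≤ C * Real.exp (a * s) ∧ |g₂' s| ≤ C * Real.exp (a * s))
    (hg2c : g₂ 0 = c) :
    α₁ = α₂ :=
  stmt5_general z gn gn' gn'' f g₁ g₁' g₁'' g₂ g₂' g₂'' c α₁ α₂ hgn1 hgn2 hgneq hgn0 hnorm hgndec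
    hg11 hg12 hg1eq hg1dec hg1c hg21 hg22 hg2eq hg2dec hg2c
end

section
/- Let I ⊂ ℝ be an open interval, h > 0, V : I → ℝ continuous, and let (λ, ψ) satisfy −h²ψ'' + Vψ = λψ on I with ψ twice continuously differentiable and compactly supported in I. Then for every continuously differentiable Φ : I → ℝ, ∫_I [ h²·|(e^{Φ}ψ)'|² + V·|e^{Φ}ψ|² − h²·|Φ'·e^{Φ}ψ|² − λ·|e^{Φ}ψ|² ] = 0. -/
/-!
Pointwise, the integrand is `h²` times the derivative of the flux `e^{2Φ} ψ ψ'`: expanding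
`(e^Φ ψ)' = e^Φ (Φ' ψ + ψ')` gives `(e^Φ ψ)'² − (Φ' e^Φ ψ)² = (e^{2Φ} ψ ψ')' − e^{2Φ} ψ ψ''`,
and the eigenvalue equation turns `−h² e^{2Φ} ψ ψ''` into `(λ − V) e^{2Φ} ψ²`. The flux is `C¹`
with compact support inside `I`, so the integral of its derivative vanishes.
-/

open MeasureTheory Set

theorem ContDiffOn.contDiff_of_tsupport_subset {𝕜 E F : Type*} [NontriviallyNormedField 𝕜]
    [NormedAddCommGroup E] [NormedSpace 𝕜 E] [NormedAddCommGroup F] [NormedSpace 𝕜 F]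
    {n : WithTop ℕ∞} {f : E → F} {U : Set E} (hf : ContDiffOn 𝕜 n f U) (hU : IsOpen U)
    (hsub : tsupport f ⊆ U) : ContDiff 𝕜 n f := by
  refine contDiff_of_contDiffOn_union_of_isOpen hf (t := (tsupport f)ᶜ) ?_ ?_ hU
    (isClosed_tsupport f).isOpen_compl
  · exact (contDiffOn_const (c := 0)).congr fun x hx => image_eq_zero_of_notMem_tsupport hx
  · exact eq_univ_of_forall fun x => (em (x ∈ tsupport f)).imp (@hsub x) id

theorem HasCompactSupport.integral_deriv_eq_zero {E : Type*} [NormedAddCommGroup E]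
    [NormedSpace ℝ E] {f : ℝ → E} (hf : ContDiff ℝ 1 f) (h2f : HasCompactSupport f) :
    ∫ x, deriv f x = 0 :=
  integral_eq_zero_of_hasDerivAt_of_integrable
    (fun x => (hf.differentiable one_ne_zero x).hasDerivAt)
    ((hf.continuous_deriv le_rfl).integrable_of_hasCompactSupport h2f.deriv)
    (hf.continuous.integrable_of_hasCompactSupport h2f)

noncomputable def agmonFlux (Φ ψ : ℝ → ℝ) (x : ℝ) : ℝ :=
  Real.exp (Φ x) ^ 2 * (ψ x * deriv ψ x)

section agmonFlux

variable {Φ ψ : ℝ → ℝ}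

theorem tsupport_agmonFlux_subset : tsupport (agmonFlux Φ ψ) ⊆ tsupport ψ :=
  tsupport_mul_subset_right.trans tsupport_mul_subset_left

theorem HasCompactSupport.agmonFlux (hψ : HasCompactSupport ψ) :
    HasCompactSupport (agmonFlux Φ ψ) :=
  (hψ.mul_right (f' := deriv ψ)).mul_left

theorem contDiffOn_agmonFlux {U : Set ℝ} (hΦ : ContDiffOn ℝ 1 Φ U) (hψ : ContDiff ℝ 2 ψ) :
    ContDiffOn ℝ 1 (agmonFlux Φ ψ) U :=
  (hΦ.exp.pow 2).mul ((hψ.of_le one_le_two).mul hψ.deriv').contDiffOn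

theorem sq_deriv_exp_mul_sub_sq {x : ℝ} (hΦ : DifferentiableAt ℝ Φ x)
    (hψ : DifferentiableAt ℝ ψ x) (hψ' : DifferentiableAt ℝ (deriv ψ) x) :
    deriv (fun y => Real.exp (Φ y) * ψ y) x ^ 2 - (deriv Φ x * Real.exp (Φ x) * ψ x) ^ 2
      = deriv (agmonFlux Φ ψ) x - Real.exp (Φ x) ^ 2 * ψ x * deriv (deriv ψ) x := by
  have hexp := hΦ.hasDerivAt.exp
  have hprod : deriv (fun y => Real.exp (Φ y) * ψ y) x
      = Real.exp (Φ x) * deriv Φ x * ψ x + Real.exp (Φ x) * deriv ψ x :=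
    (hexp.mul hψ.hasDerivAt).deriv
  have hflux : deriv (agmonFlux Φ ψ) x = Real.exp (Φ x) ^ 2
      * (2 * deriv Φ x * ψ x * deriv ψ x + deriv ψ x ^ 2 + ψ x * deriv (deriv ψ) x) :=
    (HasDerivAt.deriv (f := agmonFlux Φ ψ)
      ((hexp.pow 2).mul (hψ.hasDerivAt.mul hψ'.hasDerivAt))).trans
      (by simp only [Pi.pow_apply]; push_cast; ring)
  rw [hprod, hflux]
  ring

end agmonFlux

theorem stmt17_general (I : Set ℝ) (hI : IsOpen I)
    (h lam : ℝ) (V : ℝ → ℝ)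
    (ψ : ℝ → ℝ) (hψ : ContDiff ℝ 2 ψ) (hsupp : HasCompactSupport ψ)
    (hsub : tsupport ψ ⊆ I)
    (heq : ∀ x ∈ I, -h ^ 2 * deriv (deriv ψ) x + V x * ψ x = lam * ψ x)
    (Φ : ℝ → ℝ) (hΦ : ContDiffOn ℝ 1 Φ I) :
    ∫ x in I, (h ^ 2 * (deriv (fun y => Real.exp (Φ y) * ψ y) x) ^ 2
      + V x * (Real.exp (Φ x) * ψ x) ^ 2
      - h ^ 2 * (deriv Φ x * Real.exp (Φ x) * ψ x) ^ 2
      - lam * (Real.exp (Φ x) * ψ x) ^ 2) = 0 := by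
  have hflux_sub : tsupport (agmonFlux Φ ψ) ⊆ I := tsupport_agmonFlux_subset.trans hsub
  have hflux : ContDiff ℝ 1 (agmonFlux Φ ψ) :=
    (contDiffOn_agmonFlux hΦ hψ).contDiff_of_tsupport_subset hI hflux_sub
  have hpointwise : ∀ x ∈ I, h ^ 2 * (deriv (fun y => Real.exp (Φ y) * ψ y) x) ^ 2
      + V x * (Real.exp (Φ x) * ψ x) ^ 2
      - h ^ 2 * (deriv Φ x * Real.exp (Φ x) * ψ x) ^ 2
      - lam * (Real.exp (Φ x) * ψ x) ^ 2 = h ^ 2 * deriv (agmonFlux Φ ψ) x := by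
    intro x hx
    have hΦx := (hΦ.differentiableOn one_ne_zero).differentiableAt (hI.mem_nhds hx)
    have hψx := hψ.differentiable two_ne_zero x
    have hψ'x := hψ.deriv'.differentiable one_ne_zero x
    linear_combination h ^ 2 * sq_deriv_exp_mul_sub_sq hΦx hψx hψ'x
      + Real.exp (Φ x) ^ 2 * ψ x * heq x hx
  calc _ = ∫ x in I, h ^ 2 * deriv (agmonFlux Φ ψ) x :=
        setIntegral_congr_fun hI.measurableSet hpointwise
    _ = ∫ x, h ^ 2 * deriv (agmonFlux Φ ψ) x :=
        setIntegral_eq_integral_of_forall_compl_eq_zero fun x hx => by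
          rw [deriv_of_notMem_tsupport fun hx' => hx (hflux_sub hx'), mul_zero]
    _ = 0 := by
        rw [integral_const_mul, hsupp.agmonFlux.integral_deriv_eq_zero hflux, mul_zero]

theorem stmt17 (I : Set ℝ) (hI : IsOpen I) (hI' : I.OrdConnected)
    (h lam : ℝ) (hh : 0 < h) (V : ℝ → ℝ) (hV : ContinuousOn V I)
    (ψ : ℝ → ℝ) (hψ : ContDiff ℝ 2 ψ) (hsupp : HasCompactSupport ψ)
    (hsub : tsupport ψ ⊆ I)
    (heq : ∀ x ∈ I, -h ^ 2 * deriv (deriv ψ) x + V x * ψ x = lam * ψ x)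
    (Φ : ℝ → ℝ) (hΦ : ContDiffOn ℝ 1 Φ I) :
    ∫ x in I, (h ^ 2 * (deriv (fun y => Real.exp (Φ y) * ψ y) x) ^ 2
      + V x * (Real.exp (Φ x) * ψ x) ^ 2
      - h ^ 2 * (deriv Φ x * Real.exp (Φ x) * ψ x) ^ 2
      - lam * (Real.exp (Φ x) * ψ x) ^ 2) = 0 :=
  stmt17_general I hI h lam V ψ hψ hsupp hsub heq Φ hΦ
end
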